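/- Let ε > 0 and let q₁ = (x₁, y₁, z₁) with x₁² + y₁² > 0 and z₁ > 0. Then there exists exactly one triple (θ, φ, τ) with θ ∈ (0, π/2), φ ∈ ℝ/2πℤ, τ ∈ (0, 2π) such that Exp_ε(θ, φ, 2πετ/(2π sin θ)) = q₁; i.e., the restriction of Exp_ε to N = (0, π/2) × (ℝ/2πℤ) × (0, 2π) (in the (θ, φ, τ)-coordinates) is a bijection onto D = {(x,y,z) : x² + y² > 0, z > 0}. -/

import Mathlib

set_option maxHeartbeats 1000000


open Real

/-- The exponential map of the Riemannian problem `P_ε` on the Heisenberg group, in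
coordinates `(θ, φ, τ)` with `φ ∈ ℝ/2πℤ`, `τ = h₃ t`, `h₃ = sin θ/ε`
(so `t = ετ/sin θ = 2πετ/(2π sin θ)`). -/
noncomputable def ExpMapTau (ε : ℝ) (p : ℝ × Real.Angle × ℝ) : ℝ × ℝ × ℝ :=
  let θ := p.1; let φ := p.2.1; let τ := p.2.2
  let h₃ := Real.sin θ / ε
  ((Real.cos θ * φ.cos * Real.sin τ + Real.cos θ * φ.sin * (Real.cos τ - 1)) / h₃,
   (Real.cos θ * φ.sin * Real.sin τ - Real.cos θ * φ.cos * (Real.cos τ - 1)) / h₃,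
   (1 - ε ^ 2 * h₃ ^ 2) * (τ - Real.sin τ) / (2 * h₃ ^ 2) + ε ^ 2 * τ)



noncomputable def hfun (τ : ℝ) : ℝ := (τ - Real.sin τ) / (1 - Real.cos τ)

lemma one_sub_cos_eq (τ : ℝ) : 1 - Real.cos τ = 2 * Real.sin (τ/2) ^ 2 := by
  have h := Real.cos_two_mul (τ/2)
  have h2 := Real.sin_sq_add_cos_sq (τ/2)
  have : Real.cos τ = Real.cos (2 * (τ/2)) := by ring_nf
  rw [this, h]; nlinarith

lemma sin_two_halves (τ : ℝ) : Real.sin τ = 2 * Real.sin (τ/2) * Real.cos (τ/2) := by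
  have : Real.sin τ = Real.sin (2 * (τ/2)) := by ring_nf
  rw [this, Real.sin_two_mul]

lemma sin_half_pos {τ : ℝ} (h0 : 0 < τ) (h2 : τ < 2*π) : 0 < Real.sin (τ/2) :=
  Real.sin_pos_of_pos_of_lt_pi (by linarith) (by linarith)

lemma one_sub_cos_pos {τ : ℝ} (h0 : 0 < τ) (h2 : τ < 2*π) : 0 < 1 - Real.cos τ := by
  rw [one_sub_cos_eq]; nlinarith [sin_half_pos h0 h2]
  
lemma key_ineq {s : ℝ} (h0 : 0 < s) (h1 : s < π) : s * Real.cos s < Real.sin s := by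
  rcases le_or_gt (Real.cos s) 0 with hc | hc
  · have hsin : 0 < Real.sin s := Real.sin_pos_of_pos_of_lt_pi h0 h1
    nlinarith
  · have hs2 : s < π/2 := by
      by_contra hle
      push_neg at hle
      exact absurd (Real.cos_nonpos_of_pi_div_two_le_of_le hle (by linarith [Real.pi_pos])) (not_le.2 hc)
    have := Real.lt_tan h0 hs2
    rw [Real.tan_eq_sin_div_cos] at this
    calc s * Real.cos s < (Real.sin s / Real.cos s) * Real.cos s := by
          exact mul_lt_mul_of_pos_right this hc
      _ = Real.sin s := by field_simp

lemma num_pos {τ : ℝ} (h0 : 0 < τ) (h2 : τ < 2*π) :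
    0 < 2 - 2 * Real.cos τ - τ * Real.sin τ := by
  have e1 := one_sub_cos_eq τ
  have e2 := sin_two_halves τ
  have hk := key_ineq (s := τ/2) (by linarith) (by linarith)
  have hs := sin_half_pos h0 h2
  nlinarith [mul_pos hs (sub_pos.2 hk)]

lemma hfun_hasDeriv {τ : ℝ} (h : 1 - Real.cos τ ≠ 0) :
    HasDerivAt hfun ((2 - 2*Real.cos τ - τ*Real.sin τ)/(1-Real.cos τ)^2) τ := by
  have h1 : HasDerivAt (fun t : ℝ => t - Real.sin t) (1 - Real.cos τ) τ :=
    (hasDerivAt_id τ).sub (Real.hasDerivAt_sin τ)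
  have h2 : HasDerivAt (fun t : ℝ => 1 - Real.cos t) (Real.sin τ) τ := by
    simpa using (Real.hasDerivAt_cos τ).const_sub 1
  have : HasDerivAt hfun _ τ := h1.div h2 h
  convert this using 1
  have hp := Real.sin_sq_add_cos_sq τ
  field_simp
  ring_nf
  nlinarith [hp]
lemma hfun_contOn {a b : ℝ} (hsub : Set.Icc a b ⊆ Set.Ioo 0 (2*π)) :
    ContinuousOn hfun (Set.Icc a b) := by
  apply ContinuousOn.div
  · exact (continuous_id.sub Real.continuous_sin).continuousOn
  · exact (continuous_const.sub Real.continuous_cos).continuousOn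
  · intro x hx
    exact (one_sub_cos_pos (hsub hx).1 (hsub hx).2).ne'

lemma gmono {K : ℝ} (hK : 0 < K) :
    StrictMonoOn (fun τ => K * hfun τ + τ) (Set.Ioo 0 (2*π)) := by
  apply strictMonoOn_of_deriv_pos (convex_Ioo _ _)
  · apply ContinuousOn.add _ continuousOn_id
    apply ContinuousOn.mul continuousOn_const
    apply ContinuousOn.div
    · exact (continuous_id.sub Real.continuous_sin).continuousOn
    · exact (continuous_const.sub Real.continuous_cos).continuousOn
    · intro x hx
      exact (one_sub_cos_pos hx.1 hx.2).ne'
  · intro x hx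
    rw [interior_Ioo] at hx
    have hd : HasDerivAt (fun τ => K * hfun τ + τ)
        (K * ((2 - 2*Real.cos x - x*Real.sin x)/(1-Real.cos x)^2) + 1) x :=
      ((hfun_hasDeriv (one_sub_cos_pos hx.1 hx.2).ne').const_mul K).add (hasDerivAt_id x)
    rw [hd.deriv]
    have hn := num_pos hx.1 hx.2
    have hden : 0 < (1 - Real.cos x)^2 := by
      have := one_sub_cos_pos hx.1 hx.2; positivity
    have : 0 < K * ((2 - 2*Real.cos x - x*Real.sin x)/(1-Real.cos x)^2) :=
      mul_pos hK (div_pos hn hden)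
    linarith

lemma angle_ext {φ ψ : Real.Angle} (hc : φ.cos = ψ.cos) (hs : φ.sin = ψ.sin) : φ = ψ := by
  induction φ using Real.Angle.induction_on with | h a =>
  induction ψ using Real.Angle.induction_on with | h b =>
  exact Real.Angle.cos_sin_inj
    (by simpa [Real.Angle.cos_coe] using hc) (by simpa [Real.Angle.sin_coe] using hs)
lemma exp_eq (ε θ : ℝ) (φ : Real.Angle) (τ : ℝ) (hε : ε ≠ 0) (hθ : Real.sin θ ≠ 0) :
    ExpMapTau ε (θ, φ, τ) =
      (ε * (Real.cos θ / Real.sin θ) * (φ.cos * Real.sin τ + φ.sin * (Real.cos τ - 1)),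
       ε * (Real.cos θ / Real.sin θ) * (φ.sin * Real.sin τ - φ.cos * (Real.cos τ - 1)),
       ε^2 * ((Real.cos θ / Real.sin θ)^2 * (τ - Real.sin τ)/2 + τ)) := by
  have hp := Real.sin_sq_add_cos_sq θ
  simp only [ExpMapTau, Prod.mk.injEq]
  refine ⟨by field_simp, by field_simp, ?_⟩
  field_simp
  linear_combination (-(τ - Real.sin τ)) * hp
lemma exp_sq (ε θ : ℝ) (φ : Real.Angle) (τ : ℝ) (hε : ε ≠ 0) (hθ : Real.sin θ ≠ 0) :
    (ExpMapTau ε (θ, φ, τ)).1 ^ 2 + (ExpMapTau ε (θ, φ, τ)).2.1 ^ 2 =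
      2 * ε^2 * (Real.cos θ / Real.sin θ)^2 * (1 - Real.cos τ) := by
  rw [exp_eq ε θ φ τ hε hθ]
  have h1 := φ.cos_sq_add_sin_sq
  have h2 := Real.sin_sq_add_cos_sq τ
  dsimp only
  linear_combination (ε^2*(Real.cos θ / Real.sin θ)^2*(Real.sin τ^2+(Real.cos τ-1)^2)) * h1
    + (ε^2*(Real.cos θ / Real.sin θ)^2) * h2
lemma hfun_lt {τ : ℝ} (h0 : 0 < τ) (h1 : τ < π) : hfun τ < τ := by
  have hd : 0 < 1 - Real.cos τ := one_sub_cos_pos h0 (by linarith [Real.pi_pos])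
  rw [hfun, div_lt_iff₀ hd]
  nlinarith [key_ineq h0 h1]

lemma exists_tau {K W : ℝ} (hK : 0 < K) (hW : 0 < W) :
    ∃ τ ∈ Set.Ioo 0 (2*π), K * hfun τ + τ = W := by
  have hπ := Real.pi_gt_three
  set τ₀ : ℝ := min (W/(K+1)) (π/2) with hτ₀def
  have hτ₀pos : 0 < τ₀ := lt_min (by positivity) (by linarith)
  have hτ₀le : τ₀ ≤ π/2 := min_le_right _ _
  set s : ℝ := min (Real.sqrt (K/W)) (π/2) with hsdef
  have hspos : 0 < s := lt_min (Real.sqrt_pos.2 (by positivity)) (by linarith)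
  have hsle : s ≤ π/2 := min_le_right _ _
  set τ₁ : ℝ := 2*π - s with hτ₁def
  have hτ₁mem : τ₁ ∈ Set.Ioo 0 (2*π) := ⟨by linarith, by linarith⟩
  have hτ₁ge : 3 ≤ τ₁ := by linarith
  have h01 : τ₀ ≤ τ₁ := by linarith
  have hsub : Set.Icc τ₀ τ₁ ⊆ Set.Ioo 0 (2*π) := fun x hx =>
    ⟨lt_of_lt_of_le hτ₀pos hx.1, lt_of_le_of_lt hx.2 hτ₁mem.2⟩
  -- g τ₀ < W
  have hg0 : K * hfun τ₀ + τ₀ < W := by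
    have hlt := hfun_lt hτ₀pos (by linarith)
    have : (K+1) * τ₀ ≤ (K+1) * (W/(K+1)) :=
      mul_le_mul_of_nonneg_left (min_le_left _ _) (by positivity)
    rw [mul_div_cancel₀ _ (by positivity : (K:ℝ)+1 ≠ 0)] at this
    nlinarith
  -- g τ₁ > W
  have hcos : 1 - Real.cos τ₁ ≤ K/(2*W) := by
    have h1 : Real.cos τ₁ = Real.cos s := by rw [hτ₁def, Real.cos_two_pi_sub]
    have h2 : 1 - Real.cos s ≤ s^2/2 := by
      rw [one_sub_cos_eq]
      have hs2 : Real.sin (s/2) ≤ s/2 := Real.sin_le (by linarith)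
      have hs3 : 0 ≤ Real.sin (s/2) :=
        Real.sin_nonneg_of_nonneg_of_le_pi (by linarith) (by linarith)
      nlinarith
    have h3 : s^2 ≤ K/W := by
      have := min_le_left (Real.sqrt (K/W)) (π/2)
      nlinarith [Real.sq_sqrt (le_of_lt (div_pos hK hW)), hspos]
    have he : K/(2*W) = (K/W)/2 := by ring
    rw [h1]; linarith
  have hdpos : 0 < 1 - Real.cos τ₁ := one_sub_cos_pos hτ₁mem.1 hτ₁mem.2
  have hg1 : W < K * hfun τ₁ + τ₁ := by
    have hsin : Real.sin τ₁ ≤ 1 := Real.sin_le_one τ₁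
    have hnum : 2 ≤ τ₁ - Real.sin τ₁ := by linarith
    have hh : 2 / (1 - Real.cos τ₁) ≤ hfun τ₁ := by
      rw [hfun]; gcongr
    have h6 : 4*W ≤ 2*K/(1 - Real.cos τ₁) := by
      rw [le_div_iff₀ hdpos]
      have he2 : 4*W*(K/(2*W)) = 2*K := by field_simp; ring
      nlinarith [mul_le_mul_of_nonneg_left hcos (by linarith : (0:ℝ) ≤ 4*W)]
    have h8 : K * (2/(1 - Real.cos τ₁)) ≤ K * hfun τ₁ :=
      mul_le_mul_of_nonneg_left hh hK.le
    have h9 : K * (2/(1 - Real.cos τ₁)) = 2*K/(1 - Real.cos τ₁) := by ring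
    linarith
  -- IVT
  have hcont : ContinuousOn (fun τ => K * hfun τ + τ) (Set.Icc τ₀ τ₁) :=
    ((hfun_contOn hsub).const_smul K).add continuousOn_id |>.congr (fun x _ => by simp [smul_eq_mul])
  have := intermediate_value_Icc h01 hcont
  have hWmem : W ∈ Set.Icc ((fun τ => K * hfun τ + τ) τ₀) ((fun τ => K * hfun τ + τ) τ₁) :=
    ⟨le_of_lt hg0, le_of_lt hg1⟩
  obtain ⟨τ, hτmem, hτeq⟩ := this hWmem
  exact ⟨τ, hsub hτmem, hτeq⟩
lemma maps_to (ε : ℝ) (hε : 0 < ε) :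
    Set.MapsTo (ExpMapTau ε)
      (Set.Ioo 0 (π / 2) ×ˢ (Set.univ : Set Real.Angle) ×ˢ Set.Ioo 0 (2 * π))
      {q : ℝ × ℝ × ℝ | q.1 ^ 2 + q.2.1 ^ 2 > 0 ∧ 0 < q.2.2} := by
  rintro ⟨θ, φ, τ⟩ ⟨hθ, -, hτ⟩
  simp only [Set.mem_Ioo] at hθ hτ
  obtain ⟨hθ1, hθ2⟩ := hθ
  obtain ⟨hτ1, hτ2⟩ := hτ
  have hπ := Real.pi_pos
  have hθs : 0 < Real.sin θ := Real.sin_pos_of_pos_of_lt_pi hθ1 (by linarith)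
  have hθc : 0 < Real.cos θ := Real.cos_pos_of_mem_Ioo ⟨by linarith, hθ2⟩
  have h1c : 0 < 1 - Real.cos τ := one_sub_cos_pos hτ1 hτ2
  constructor
  · show 0 < _
    have := exp_sq ε θ φ τ hε.ne' hθs.ne'
    rw [this]
    positivity
  · show 0 < (ExpMapTau ε (θ, φ, τ)).2.2
    rw [exp_eq ε θ φ τ hε.ne' hθs.ne']
    have hst : Real.sin τ < τ := Real.sin_lt hτ1
    have hq : (0:ℝ) ≤ (Real.cos θ / Real.sin θ)^2 * (τ - Real.sin τ)/2 :=
      div_nonneg (mul_nonneg (sq_nonneg _) (by linarith)) (by norm_num)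
    show 0 < ε ^ 2 * ((Real.cos θ / Real.sin θ)^2 * (τ - Real.sin τ)/2 + τ)
    exact mul_pos (pow_pos hε 2) (by linarith)
lemma inj_on (ε : ℝ) (hε : 0 < ε) :
    Set.InjOn (ExpMapTau ε)
      (Set.Ioo 0 (π / 2) ×ˢ (Set.univ : Set Real.Angle) ×ˢ Set.Ioo 0 (2 * π)) := by
  rintro ⟨θ, φ, τ⟩ ⟨hθ, -, hτ⟩ ⟨θ', φ', τ'⟩ ⟨hθ', -, hτ'⟩ heq
  simp only [Set.mem_Ioo] at hθ hτ hθ' hτ'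
  obtain ⟨hθ1, hθ2⟩ := hθ; obtain ⟨hτ1, hτ2⟩ := hτ
  obtain ⟨hθ1', hθ2'⟩ := hθ'; obtain ⟨hτ1', hτ2'⟩ := hτ'
  have hπ := Real.pi_pos
  have hθs : 0 < Real.sin θ := Real.sin_pos_of_pos_of_lt_pi hθ1 (by linarith)
  have hθc : 0 < Real.cos θ := Real.cos_pos_of_mem_Ioo ⟨by linarith, hθ2⟩
  have hθs' : 0 < Real.sin θ' := Real.sin_pos_of_pos_of_lt_pi hθ1' (by linarith)
  have hθc' : 0 < Real.cos θ' := Real.cos_pos_of_mem_Ioo ⟨by linarith, hθ2'⟩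
  have h1c : 0 < 1 - Real.cos τ := one_sub_cos_pos hτ1 hτ2
  have h1c' : 0 < 1 - Real.cos τ' := one_sub_cos_pos hτ1' hτ2'
  set u := Real.cos θ / Real.sin θ with hudef
  set u' := Real.cos θ' / Real.sin θ' with hudef'
  have hu : 0 < u := div_pos hθc hθs
  have hu' : 0 < u' := div_pos hθc' hθs'
  -- equality of x²+y²
  have hsq : 2 * ε^2 * u^2 * (1 - Real.cos τ) = 2 * ε^2 * u'^2 * (1 - Real.cos τ') := by
    rw [← exp_sq ε θ φ τ hε.ne' hθs.ne', ← exp_sq ε θ' φ' τ' hε.ne' hθs'.ne', heq]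
  have hKeq : u^2 * (1 - Real.cos τ) = u'^2 * (1 - Real.cos τ') := by
    have h2ε : (2 * ε^2 : ℝ) ≠ 0 := by positivity
    exact mul_left_cancel₀ h2ε (by linear_combination hsq)
  set K : ℝ := u^2 * (1 - Real.cos τ) / 2 with hKdef
  have hK : 0 < K := div_pos (mul_pos (pow_pos hu 2) h1c) two_pos
  -- equality of z
  have hz := congrArg (fun q : ℝ × ℝ × ℝ => q.2.2) heq
  rw [exp_eq ε θ φ τ hε.ne' hθs.ne', exp_eq ε θ' φ' τ' hε.ne' hθs'.ne'] at hz
  simp only at hz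
  have hzz : u^2 * (τ - Real.sin τ)/2 + τ = u'^2 * (τ' - Real.sin τ')/2 + τ' := by
    have hε2 : (ε^2 : ℝ) ≠ 0 := by positivity
    exact mul_left_cancel₀ hε2 (by linear_combination hz)
  have hKh : K * hfun τ + τ = K * hfun τ' + τ' := by
    have e1 : K * hfun τ = u^2 * (τ - Real.sin τ)/2 := by
      rw [hKdef, hfun]; field_simp
    have e2 : K * hfun τ' = u'^2 * (τ' - Real.sin τ')/2 := by
      rw [hKdef, hKeq, hfun]; field_simp
    rw [e1, e2]; exact hzz
  have hττ : τ = τ' :=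
    (gmono hK).injOn ⟨hτ1, hτ2⟩ ⟨hτ1', hτ2'⟩ hKh
  subst hττ
  have huu : u = u' := by
    have hsq2 : u^2 = u'^2 := by
      have := mul_right_cancel₀ h1c.ne' hKeq
      exact this
    have h1 : u ≤ u' := by nlinarith
    have h2 : u' ≤ u := by nlinarith
    linarith
  have hθθ : θ = θ' := by
    have htan : Real.tan θ = Real.tan θ' := by
      rw [Real.tan_eq_sin_div_cos, Real.tan_eq_sin_div_cos]
      rw [hudef, hudef'] at huu
      field_simp at huu ⊢
      linarith
    exact Real.injOn_tan ⟨by linarith, by linarith⟩ ⟨by linarith, by linarith⟩ htan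
  subst hθθ
  -- now φ = φ'
  have hx := congrArg (fun q : ℝ × ℝ × ℝ => q.1) heq
  have hy := congrArg (fun q : ℝ × ℝ × ℝ => q.2.1) heq
  rw [exp_eq ε θ φ τ hε.ne' hθs.ne', exp_eq ε θ φ' τ hε.ne' hθs.ne'] at hx hy
  simp only at hx hy
  have hC : (ε * u : ℝ) ≠ 0 := (mul_pos hε hu).ne'
  have hx' : φ.cos * Real.sin τ + φ.sin * (Real.cos τ - 1)
      = φ'.cos * Real.sin τ + φ'.sin * (Real.cos τ - 1) :=
    mul_left_cancel₀ hC (by linear_combination hx)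
  have hy' : φ.sin * Real.sin τ - φ.cos * (Real.cos τ - 1)
      = φ'.sin * Real.sin τ - φ'.cos * (Real.cos τ - 1) :=
    mul_left_cancel₀ hC (by linear_combination hy)
  have hpy : Real.sin τ^2 + (Real.cos τ - 1)^2 = 2*(1 - Real.cos τ) := by
    linear_combination Real.sin_sq_add_cos_sq τ
  have hne : Real.sin τ^2 + (Real.cos τ - 1)^2 ≠ 0 := by
    rw [hpy]; exact (mul_pos two_pos h1c).ne'
  have hA : φ.cos = φ'.cos := by
    have key : (φ.cos - φ'.cos) * (Real.sin τ^2 + (Real.cos τ - 1)^2) = 0 := by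
      linear_combination Real.sin τ * hx' - (Real.cos τ - 1) * hy'
    rcases mul_eq_zero.mp key with h | h
    · linarith
    · exact absurd h hne
  have hB : φ.sin = φ'.sin := by
    have key : (φ.sin - φ'.sin) * (Real.sin τ^2 + (Real.cos τ - 1)^2) = 0 := by
      linear_combination (Real.cos τ - 1) * hx' + Real.sin τ * hy'
    rcases mul_eq_zero.mp key with h | h
    · linarith
    · exact absurd h hne
  rw [angle_ext hA hB]
lemma surj_on (ε : ℝ) (hε : 0 < ε) :
    Set.SurjOn (ExpMapTau ε)
      (Set.Ioo 0 (π / 2) ×ˢ (Set.univ : Set Real.Angle) ×ˢ Set.Ioo 0 (2 * π))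
      {q : ℝ × ℝ × ℝ | q.1 ^ 2 + q.2.1 ^ 2 > 0 ∧ 0 < q.2.2} := by
  rintro ⟨x, y, z⟩ ⟨hxy, hz⟩
  simp only at hxy hz
  have hπ := Real.pi_pos
  set R : ℝ := Real.sqrt (x^2 + y^2) with hRdef
  have hR : 0 < R := Real.sqrt_pos.2 hxy
  have hR2 : R^2 = x^2 + y^2 := Real.sq_sqrt hxy.le
  set K : ℝ := R^2 / (4*ε^2) with hKdef
  have hK : 0 < K := by positivity
  set W : ℝ := z / ε^2 with hWdef
  have hW : 0 < W := by positivity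
  obtain ⟨τ, hτmem, hτeq⟩ := exists_tau hK hW
  obtain ⟨hτ1, hτ2⟩ := hτmem
  have hsh : 0 < Real.sin (τ/2) := sin_half_pos hτ1 hτ2
  have h1c : 0 < 1 - Real.cos τ := one_sub_cos_pos hτ1 hτ2
  set v : ℝ := R / (2*ε*Real.sin (τ/2)) with hvdef
  have hv : 0 < v := by positivity
  set θ : ℝ := Real.arctan v⁻¹ with hθdef
  have hθ1 : 0 < θ := by
    rw [hθdef, ← Real.arctan_zero]
    exact Real.arctan_strictMono (by positivity)
  have hθ2 : θ < π/2 := Real.arctan_lt_pi_div_two _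
  have hθs : 0 < Real.sin θ := Real.sin_pos_of_pos_of_lt_pi hθ1 (by linarith)
  have hθc : 0 < Real.cos θ := Real.cos_arctan_pos _
  have huv : Real.cos θ / Real.sin θ = v := by
    have htan : Real.tan θ = v⁻¹ := Real.tan_arctan _
    rw [Real.tan_eq_sin_div_cos] at htan
    field_simp at htan ⊢
    nlinarith [htan]
  set w : ℂ := ⟨x, y⟩ with hwdef
  have hw0 : w ≠ 0 := by
    intro h
    rw [Complex.ext_iff] at h
    simp [hwdef] at h
    nlinarith [h.1, h.2, hxy]
  have habs : ‖w‖ = R := by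
    rw [Complex.norm_def, hwdef, Complex.normSq_mk, hRdef]
    ring_nf
  set ψ : ℝ := Complex.arg w with hψdef
  have hcψ : Real.cos ψ = x / R := by
    rw [hψdef, Complex.cos_arg hw0, habs]
  have hsψ : Real.sin ψ = y / R := by
    rw [hψdef, Complex.sin_arg, habs]
  refine ⟨(θ, ((ψ - τ/2 : ℝ) : Real.Angle), τ), ⟨⟨hθ1, hθ2⟩, Set.mem_univ _, hτ1, hτ2⟩, ?_⟩
  rw [exp_eq ε θ _ τ hε.ne' hθs.ne', huv]
  have hAc : Real.Angle.cos ((ψ - τ/2 : ℝ) : Real.Angle) = Real.cos (ψ - τ/2) :=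
    Real.Angle.cos_coe _
  have hAs : Real.Angle.sin ((ψ - τ/2 : ℝ) : Real.Angle) = Real.sin (ψ - τ/2) :=
    Real.Angle.sin_coe _
  rw [hAc, hAs]
  have hpy2 := Real.sin_sq_add_cos_sq (τ/2)
  have hcτ : Real.cos τ = 1 - 2*Real.sin (τ/2)^2 := by linarith [one_sub_cos_eq τ]
  have he1 : Real.cos (ψ - τ/2) * Real.sin τ + Real.sin (ψ - τ/2) * (Real.cos τ - 1)
      = 2*Real.sin (τ/2) * Real.cos ψ := by
    rw [Real.cos_sub, Real.sin_sub, sin_two_halves τ, hcτ]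
    linear_combination (2*Real.sin (τ/2)*Real.cos ψ) * hpy2
  have he2 : Real.sin (ψ - τ/2) * Real.sin τ - Real.cos (ψ - τ/2) * (Real.cos τ - 1)
      = 2*Real.sin (τ/2) * Real.sin ψ := by
    rw [Real.cos_sub, Real.sin_sub, sin_two_halves τ, hcτ]
    linear_combination (2*Real.sin (τ/2)*Real.sin ψ) * hpy2
  have hvR : ε * v * (2 * Real.sin (τ/2)) = R := by
    rw [hvdef]; field_simp
  refine Prod.ext ?_ (Prod.ext ?_ ?_)
  · show ε * v * (Real.cos (ψ - τ/2) * Real.sin τ + Real.sin (ψ - τ/2) * (Real.cos τ - 1)) = x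
    rw [he1, hcψ,
      show ε * v * (2*Real.sin (τ/2) * (x/R)) = (ε * v * (2*Real.sin (τ/2))) * x / R by ring,
      hvR, mul_comm R x, mul_div_assoc, div_self hR.ne', mul_one]
  · show ε * v * (Real.sin (ψ - τ/2) * Real.sin τ - Real.cos (ψ - τ/2) * (Real.cos τ - 1)) = y
    rw [he2, hsψ,
      show ε * v * (2*Real.sin (τ/2) * (y/R)) = (ε * v * (2*Real.sin (τ/2))) * y / R by ring,
      hvR, mul_comm R y, mul_div_assoc, div_self hR.ne', mul_one]
  · show ε^2 * (v^2 * (τ - Real.sin τ)/2 + τ) = z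
    have hveq : v^2 = R^2 / (2*ε^2*(1 - Real.cos τ)) := by
      rw [hvdef, eq_div_iff (by positivity), one_sub_cos_eq]
      field_simp
    have hKh : v^2*(τ - Real.sin τ)/2 = K * hfun τ := by
      rw [hveq, hKdef, hfun]
      field_simp [hε.ne', h1c.ne']
      ring
    rw [hKh, hτeq, hWdef]
    field_simp [hε.ne']

/-- The restriction of `Exp_ε` (in `(θ, φ, τ)`-coordinates) to
`N = (0, π/2) × (ℝ/2πℤ) × (0, 2π)` is a bijection onto
`D = {(x,y,z) : x² + y² > 0, z > 0}`. -/
theorem stmt_17 (ε : ℝ) (hε : 0 < ε) :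
    Set.BijOn (ExpMapTau ε)
      (Set.Ioo 0 (π / 2) ×ˢ (Set.univ : Set Real.Angle) ×ˢ Set.Ioo 0 (2 * π))
      {q : ℝ × ℝ × ℝ | q.1 ^ 2 + q.2.1 ^ 2 > 0 ∧ 0 < q.2.2} := by
  exact ⟨maps_to ε hε, inj_on ε hε, surj_on ε hε⟩
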